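/- Let p be a prime, R a commutative ring of characteristic p, k ∈ ℕ, and B = MvPolynomial (Fin k) R. For an R-derivation D of B, define the R-linear endomorphism L(D) of B by L(D)(f) = Σ_i (D X_i)^p * D_{p·e_i}(f), where e_i is the indicator function of i. Then the lift L is compatible with the Lie bracket: for all R-derivations D, D' of B, L applied to the commutator derivation [D, D'] = D∘D' − D'∘D equals the commutator of endomorphisms [L(D), L(D')] = L(D)∘L(D') − L(D')∘L(D). -/

import Mathlib

/-- The divided-power operator `D_n` on `MvPolynomial σ R`, determined on monomials by
`D_n (X ^ m) = (∏ i, Nat.choose (m i) (n i)) • X ^ (m - n)` (componentwise truncated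
subtraction). -/
noncomputable def dpOp (R : Type*) [CommRing R] (σ : Type*) [Fintype σ] (n : σ →₀ ℕ) :
    MvPolynomial σ R →ₗ[R] MvPolynomial σ R :=
  (Finsupp.lsum ℕ fun m : σ →₀ ℕ =>
    (∏ i, Nat.choose (m i) (n i)) • (MvPolynomial.monomial (m - n) : R →ₗ[R] MvPolynomial σ R))
    ∘ₗ (AddMonoidAlgebra.coeffLinearEquiv R).toLinearMap

/-- The lift `L(D) = ∑ i, (D X_i)^p • D_(p·e_i)` of a derivation `D` of
`MvPolynomial (Fin k) R` to an operator of order `≤ p`. -/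
noncomputable def dLift (p : ℕ) {R : Type*} [CommRing R] {k : ℕ}
    (D : Derivation R (MvPolynomial (Fin k) R) (MvPolynomial (Fin k) R)) :
    MvPolynomial (Fin k) R →ₗ[R] MvPolynomial (Fin k) R :=
  ∑ i, (D (MvPolynomial.X i)) ^ p • dpOp R (Fin k) (p • Finsupp.single i 1)

/-! In characteristic `p`, Lucas' theorem gives `C(n + p, p) = C(n, p) + 1`, which makes
`D_{p e_i}` a Frobenius-twisted derivation:
`D_{p e_i} (f ^ p * g) = (∂_i f) ^ p * g + f ^ p * D_{p e_i} g`.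
Hence `L(D) (f ^ p * g) = (D f) ^ p * g + f ^ p * L(D) g`. Every monomial is
`(X ^ q) ^ p * X ^ r` with all exponents of `r` below `p`, and every `L(D)` kills `X ^ r`;
applying the rule twice, `[L(D), L(D')]` sends it to `(D D' X ^ q - D' D X ^ q) ^ p * X ^ r`,
which is `L([D, D'])` of it since `p`-th powers are additive. -/

open MvPolynomial

theorem CharP.natCast_choose_add_self {p : ℕ} (hp : p.Prime) (R : Type*) [Ring R]
    [CharP R p] (n : ℕ) : ((n + p).choose p : R) = n.choose p + 1 := by
  have : Fact p.Prime := ⟨hp⟩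
  have h₁ : (n + p).choose p ≡ n / p + 1 [MOD p] := by
    simpa [Nat.div_self hp.pos, Nat.add_div_right n hp.pos] using
      Choose.choose_modEq_choose_mod_mul_choose_div_nat (n := n + p) (k := p) (p := p)
  have h₂ : n.choose p ≡ n / p [MOD p] := by
    simpa [Nat.div_self hp.pos] using
      Choose.choose_modEq_choose_mod_mul_choose_div_nat (n := n) (k := p) (p := p)
  rw [CharP.natCast_eq_natCast' R p h₁, CharP.natCast_eq_natCast' R p h₂, Nat.cast_succ]

theorem MvPolynomial.derivation_apply_eq_sum_pderiv_smul {R σ A : Type*} [CommSemiring R]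
    [Fintype σ] [AddCommMonoid A] [Module R A] [Module (MvPolynomial σ R) A]
    [IsScalarTower R (MvPolynomial σ R) A] (D : Derivation R (MvPolynomial σ R) A)
    (f : MvPolynomial σ R) : D f = ∑ i, pderiv i f • D (X i) := by
  classical
  induction f using MvPolynomial.induction_on with
  | C a => simp [derivation_C]
  | add f g hf hg => simp [hf, hg, add_smul, Finset.sum_add_distrib]
  | mul_X f j hf =>
    simp [Derivation.leibniz, hf, add_smul, Finset.sum_add_distrib, Finset.smul_sum, mul_smul,
      pderiv_X, Pi.single_apply, smul_comm (X j)]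

section DividedPower

variable {R σ : Type*} [CommRing R] [Fintype σ]

theorem dpOp_monomial (n m : σ →₀ ℕ) (c : R) :
    dpOp R σ n (monomial m c) = (∏ i, (m i).choose (n i)) • monomial (m - n) c :=
  (Finsupp.lsum_single ℕ _ _ _).trans rfl

theorem dpOp_single_monomial (i : σ) (n : ℕ) (m : σ →₀ ℕ) (c : R) :
    dpOp R σ (Finsupp.single i n) (monomial m c)
      = (m i).choose n • monomial (m - Finsupp.single i n) c := by
  rw [dpOp_monomial, Fintype.prod_eq_single i fun j hj => by simp [Ne.symm hj],
    Finsupp.single_eq_same]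

variable {p : ℕ} [CharP R p]

theorem dpOp_single_X_pow_mul (hp : p.Prime) (i j : σ) (f : MvPolynomial σ R) :
    dpOp R σ (Finsupp.single i p) (X j ^ p * f)
      = pderiv i (X j) ^ p * f + X j ^ p * dpOp R σ (Finsupp.single i p) f := by
  classical
  induction f using MvPolynomial.induction_on' with
  | add f g hf hg => simp only [mul_add, map_add, hf, hg]; ring
  | monomial m c =>
    have X_pow_mul : ∀ (s : σ →₀ ℕ) (a : R),
        X j ^ p * monomial s a = monomial (s + Finsupp.single j p) a := fun s a => by
      rw [X_pow_eq_monomial, monomial_mul, one_mul, add_comm]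
    rw [X_pow_mul, dpOp_single_monomial, dpOp_single_monomial, mul_smul_comm, X_pow_mul]
    rcases eq_or_ne i j with rfl | hij
    · rw [pderiv_X_self, one_pow, one_mul, Finsupp.add_apply, Finsupp.single_eq_same,
        add_tsub_cancel_right, ← Nat.cast_smul_eq_nsmul R,
        CharP.natCast_choose_add_self hp, add_smul, one_smul, add_comm]
      rcases le_or_gt p (m i) with h | h
      · rw [tsub_add_cancel_of_le (Finsupp.single_le_iff.mpr h), Nat.cast_smul_eq_nsmul]
      · rw [Nat.choose_eq_zero_of_lt h, Nat.cast_zero, zero_smul, zero_smul]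
    · have hsub : m + Finsupp.single j p - Finsupp.single i p
          = m - Finsupp.single i p + Finsupp.single j p := by
        ext t
        simp only [Finsupp.tsub_apply, Finsupp.add_apply, Finsupp.single_apply]
        split_ifs <;> subst_vars <;> first | omega | exact absurd rfl hij
      rw [pderiv_X_of_ne (Ne.symm hij), zero_pow hp.ne_zero, zero_mul, zero_add,
        Finsupp.add_apply, Finsupp.single_eq_of_ne hij, add_zero, hsub]

theorem dpOp_single_pow_mul (hp : p.Prime) (i : σ) (f g : MvPolynomial σ R) :
    dpOp R σ (Finsupp.single i p) (f ^ p * g)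
      = pderiv i f ^ p * g + f ^ p * dpOp R σ (Finsupp.single i p) g := by
  have : Fact p.Prime := ⟨hp⟩
  induction f using MvPolynomial.induction_on generalizing g with
  | C a =>
    rw [← map_pow, pderiv_C, zero_pow hp.ne_zero, zero_mul, zero_add, C_mul', map_smul, C_mul']
  | add f f' hf hf' =>
    rw [add_pow_char, add_mul, map_add, hf, hf', map_add, add_pow_char, add_mul]
    ring
  | mul_X f j hf =>
    rw [mul_pow, mul_assoc, hf, dpOp_single_X_pow_mul hp, Derivation.leibniz, add_pow_char,
      smul_eq_mul, smul_eq_mul, mul_pow, mul_pow]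
    ring

end DividedPower

section Lift

variable {p : ℕ} {R : Type*} [CommRing R] {k : ℕ}
  (D : Derivation R (MvPolynomial (Fin k) R) (MvPolynomial (Fin k) R))

theorem dLift_apply (f : MvPolynomial (Fin k) R) :
    dLift p D f = ∑ i, D (X i) ^ p * dpOp R (Fin k) (Finsupp.single i p) f := by
  simp only [dLift, Finsupp.smul_single, smul_eq_mul, mul_one, LinearMap.sum_apply,
    LinearMap.smul_apply]

theorem dLift_monomial_eq_zero {m : Fin k →₀ ℕ} (hm : ∀ i, m i < p) (c : R) :
    dLift p D (monomial m c) = 0 := by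
  simp only [dLift_apply, dpOp_single_monomial, Nat.choose_eq_zero_of_lt (hm _), zero_smul,
    mul_zero, Finset.sum_const_zero]

theorem dLift_pow_mul [CharP R p] (hp : p.Prime) (f g : MvPolynomial (Fin k) R) :
    dLift p D (f ^ p * g) = D f ^ p * g + f ^ p * dLift p D g := by
  have : Fact p.Prime := ⟨hp⟩
  simp only [dLift_apply, dpOp_single_pow_mul hp, mul_add, Finset.sum_add_distrib, Finset.mul_sum]
  congr 1
  · rw [derivation_apply_eq_sum_pderiv_smul D f, sum_pow_char, Finset.sum_mul]
    refine Finset.sum_congr rfl fun i _ => ?_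
    rw [smul_eq_mul, mul_pow]
    ring
  · simp only [mul_left_comm]

end Lift

theorem Finsupp.exists_eq_nsmul_add_and_lt {σ : Type*} {p : ℕ} (hp : 0 < p) (m : σ →₀ ℕ) :
    ∃ q r : σ →₀ ℕ, m = p • q + r ∧ ∀ i, r i < p :=
  ⟨m.mapRange (· / p) (Nat.zero_div p), m.mapRange (· % p) (Nat.zero_mod p),
    Finsupp.ext fun i => by simp [Nat.div_add_mod], fun i => by simp [Nat.mod_lt _ hp]⟩

/-- The lift `L` is compatible with the Lie bracket:
`L ⁅D, D'⁆ = L D ∘ L D' - L D' ∘ L D`. -/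
theorem dLift_bracket (p : ℕ) (hp : p.Prime) (R : Type*) [CommRing R] [CharP R p] (k : ℕ)
    (D D' : Derivation R (MvPolynomial (Fin k) R) (MvPolynomial (Fin k) R)) :
    dLift p ⁅D, D'⁆ = dLift p D ∘ₗ dLift p D' - dLift p D' ∘ₗ dLift p D := by
  have : Fact p.Prime := ⟨hp⟩
  refine MvPolynomial.linearMap_ext fun m => LinearMap.ext fun c => ?_
  obtain ⟨q, r, rfl, hr⟩ := Finsupp.exists_eq_nsmul_add_and_lt hp.pos m
  have hsplit : monomial (p • q + r) c = monomial q (1 : R) ^ p * monomial r c := by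
    rw [monomial_pow, monomial_mul, one_pow, one_mul]
  simp only [LinearMap.comp_apply, LinearMap.sub_apply, hsplit, dLift_pow_mul _ hp,
    dLift_monomial_eq_zero _ hr, mul_zero, add_zero, Derivation.commutator_apply, sub_pow_char]
  ring
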